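/- Let K be a field with more than 2 elements and n ≥ 2. Every range-compatible K-linear map F : Sym_n(K) → K^n is local: there exists X ∈ K^n with F(M) = MX for all symmetric n×n matrices M. -/

import Mathlib

/-!
Range compatibility forces `F (v vᵀ) = λ(v) v` for every vector `v`. Put `X i := λ(eᵢ)`. For
`i ≠ j` the value of `F` on `Eᵢⱼ + Eⱼᵢ` is a combination `a eᵢ + b eⱼ`, and comparing the two
coordinates of `F (v vᵀ)` for `v = eᵢ + c eⱼ` gives `λ(eᵢ) + c a = c λ(eⱼ) + b` for every `c ≠ 0`.
Using this for `c = 1` and for some `c ∉ {0, 1}` (here `#K > 2` is used) gives `a = Xⱼ` and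
`b = Xᵢ`, so `F` agrees with `M ↦ M X` on the matrices `Eᵢᵢ` and `Eᵢⱼ + Eⱼᵢ`, which span the
symmetric matrices in every characteristic.
-/

open Matrix

lemma exists_ne_zero_ne_one_of_two_lt_mk {K : Type*} [Zero K] [One K] (hK : 2 < Cardinal.mk K) :
    ∃ c : K, c ≠ 0 ∧ c ≠ 1 := by
  by_contra! h
  have hsub : (Set.univ : Set K) ⊆ {0, 1} := fun c _ =>
    (eq_or_ne c 0).elim Or.inl fun hc => Or.inr (h c hc)
  have hle := Cardinal.mk_le_mk_of_subset hsub
  rw [Cardinal.mk_univ] at hle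
  exact hK.not_ge (hle.trans (Cardinal.mk_insert_le.trans (by simp [one_add_one_eq_two])))

namespace Matrix

variable {K ι : Type*} [CommSemiring K]

lemma isSymm_vecMulVec_self (v : ι → K) : (vecMulVec v v).IsSymm :=
  IsSymm.ext fun i j => by simp [vecMulVec_apply, mul_comm]

variable [DecidableEq ι]

/-- The symmetric matrix unit `Eₖₗ + Eₗₖ` (`Eₖₖ` on the diagonal), indexed by the unordered pair
`s(k, l)`. -/
def symmSingle (z : Sym2 ι) : Matrix ι ι K := of fun k l => if s(k, l) = z then 1 else 0

lemma isSymm_symmSingle (z : Sym2 ι) : (symmSingle z : Matrix ι ι K).IsSymm := by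
  ext k l; simp [symmSingle, Sym2.eq_swap]

lemma vecMulVec_single_add_single {i j : ι} (hij : i ≠ j) (c : K) :
    vecMulVec (Pi.single i 1 + Pi.single j c : ι → K) (Pi.single i 1 + Pi.single j c) =
      symmSingle s(i, i) + (c * c) • symmSingle s(j, j) + c • symmSingle s(i, j) := by
  ext k l
  simp only [symmSingle, vecMulVec_apply, Pi.single_apply, Sym2.eq_iff, Pi.add_apply, add_apply,
    smul_apply, of_apply, smul_eq_mul]
  by_cases hki : k = i <;> by_cases hkj : k = j <;> by_cases hli : l = i <;> by_cases hlj : l = j <;>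
    simp_all

variable [Fintype ι]

lemma IsSymm.eq_sum_smul_symmSingle {M : Matrix ι ι K} (hM : M.IsSymm) :
    M = ∑ z, Sym2.lift ⟨fun i j => M i j, fun i j => hM.apply j i⟩ z • symmSingle z := by
  ext k l
  simp [symmSingle, Matrix.sum_apply]

lemma symmSingle_diag_mulVec (i : ι) (w : ι → K) :
    symmSingle s(i, i) *ᵥ w = Pi.single i (w i) := by
  ext k
  by_cases hk : k = i <;> simp [symmSingle, mulVec, dotProduct, hk]

lemma symmSingle_mulVec_of_ne {i j : ι} (hij : i ≠ j) (w : ι → K) :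
    symmSingle s(i, j) *ᵥ w = Pi.single i (w j) + Pi.single j (w i) := by
  ext k
  rcases eq_or_ne k i with rfl | hki <;> rcases eq_or_ne k j with rfl | hkj <;>
    simp_all [symmSingle, mulVec, dotProduct]

end Matrix

section

variable {K ι : Type*} [CommSemiring K] {F : Matrix ι ι K → ι → K}

lemma map_sum_smul_of_isSymm
    (hadd : ∀ M N : Matrix ι ι K, M.IsSymm → N.IsSymm → F (M + N) = F M + F N)
    (hsmul : ∀ (c : K) (M : Matrix ι ι K), M.IsSymm → F (c • M) = c • F M)
    {α : Type*} (s : Finset α) (c : α → K) {A : α → Matrix ι ι K} (hA : ∀ a, (A a).IsSymm) :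
    F (∑ a ∈ s, c a • A a) = ∑ a ∈ s, c a • F (A a) := by
  induction s using Finset.cons_induction with
  | empty => simpa using hsmul 0 0 isSymm_zero
  | cons a s ha ih =>
    have hs : (∑ b ∈ s, c b • A b).IsSymm :=
      Finset.sum_induction _ IsSymm (fun _ _ => IsSymm.add) isSymm_zero fun b _ => (hA b).smul _
    rw [Finset.sum_cons, Finset.sum_cons, hadd _ _ ((hA a).smul _) hs, hsmul _ _ (hA a), ih]

variable [Fintype ι]

lemma apply_vecMulVec_self_mul (hrc : ∀ M : Matrix ι ι K, M.IsSymm → F M ∈ Set.range M.mulVec)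
    (v : ι → K) (k l : ι) :
    F (vecMulVec v v) k * v l = F (vecMulVec v v) l * v k := by
  obtain ⟨w, hw⟩ := hrc _ (isSymm_vecMulVec_self v)
  simp only [← hw, vecMulVec_mulVec, Pi.smul_apply, MulOpposite.smul_eq_mul_unop,
    MulOpposite.unop_op]
  ring

variable [DecidableEq ι]

lemma apply_eq_mulVec_of_forall_symmSingle
    (hadd : ∀ M N : Matrix ι ι K, M.IsSymm → N.IsSymm → F (M + N) = F M + F N)
    (hsmul : ∀ (c : K) (M : Matrix ι ι K), M.IsSymm → F (c • M) = c • F M)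
    {X : ι → K} (hX : ∀ z, F (symmSingle z) = symmSingle z *ᵥ X)
    {M : Matrix ι ι K} (hM : M.IsSymm) : F M = M *ᵥ X := by
  rw [hM.eq_sum_smul_symmSingle, map_sum_smul_of_isSymm hadd hsmul _ _ isSymm_symmSingle,
    sum_mulVec]
  simp only [hX, smul_mulVec]

lemma apply_symmSingle_diag_eq_single
    (hrc : ∀ M : Matrix ι ι K, M.IsSymm → F M ∈ Set.range M.mulVec) (i : ι) :
    F (symmSingle s(i, i)) = Pi.single i (F (symmSingle s(i, i)) i) := by
  obtain ⟨w, hw⟩ := hrc _ (isSymm_symmSingle _)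
  rw [← hw, symmSingle_diag_mulVec]
  simp

lemma apply_symmSingle_of_ne_eq_single_add_single
    (hrc : ∀ M : Matrix ι ι K, M.IsSymm → F M ∈ Set.range M.mulVec) {i j : ι} (hij : i ≠ j) :
    F (symmSingle s(i, j)) =
      Pi.single i (F (symmSingle s(i, j)) i) + Pi.single j (F (symmSingle s(i, j)) j) := by
  obtain ⟨w, hw⟩ := hrc _ (isSymm_symmSingle _)
  rw [← hw, symmSingle_mulVec_of_ne hij]
  simp [hij, hij.symm]

end

section

variable {K ι : Type*} [Field K] [Fintype ι] [DecidableEq ι] {F : Matrix ι ι K → ι → K}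

lemma apply_symmSingle_diag_add_mul_eq
    (hadd : ∀ M N : Matrix ι ι K, M.IsSymm → N.IsSymm → F (M + N) = F M + F N)
    (hsmul : ∀ (c : K) (M : Matrix ι ι K), M.IsSymm → F (c • M) = c • F M)
    (hrc : ∀ M : Matrix ι ι K, M.IsSymm → F M ∈ Set.range M.mulVec)
    {i j : ι} (hij : i ≠ j) {c : K} (hc : c ≠ 0) :
    F (symmSingle s(i, i)) i + c * F (symmSingle s(i, j)) i =
      c * F (symmSingle s(j, j)) j + F (symmSingle s(i, j)) j := by
  set v : ι → K := Pi.single i 1 + Pi.single j c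
  have hS := isSymm_symmSingle (K := K) (ι := ι)
  have hsplit : F (vecMulVec v v) = F (symmSingle s(i, i)) + (c * c) • F (symmSingle s(j, j)) +
      c • F (symmSingle s(i, j)) := by
    rw [vecMulVec_single_add_single hij, hadd _ _ ((hS _).add ((hS _).smul _)) ((hS _).smul _),
      hadd _ _ (hS _) ((hS _).smul _), hsmul _ _ (hS _), hsmul _ _ (hS _)]
  -- coordinates `i` and `j` of `F (v vᵀ)` are in the ratio `1 : c`
  have h := apply_vecMulVec_self_mul hrc v i j
  rw [hsplit, apply_symmSingle_diag_eq_single hrc i, apply_symmSingle_diag_eq_single hrc j] at h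
  simp only [v, Pi.add_apply, Pi.smul_apply, Pi.single_eq_same, Pi.single_eq_of_ne hij,
    Pi.single_eq_of_ne hij.symm, smul_eq_mul, mul_zero, mul_one, add_zero, zero_add] at h
  exact mul_left_cancel₀ hc (by linear_combination h)

lemma apply_symmSingle_eq_mulVec
    (hadd : ∀ M N : Matrix ι ι K, M.IsSymm → N.IsSymm → F (M + N) = F M + F N)
    (hsmul : ∀ (c : K) (M : Matrix ι ι K), M.IsSymm → F (c • M) = c • F M)
    (hrc : ∀ M : Matrix ι ι K, M.IsSymm → F M ∈ Set.range M.mulVec)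
    {c : K} (hc0 : c ≠ 0) (hc1 : c ≠ 1) (z : Sym2 ι) :
    F (symmSingle z) = symmSingle z *ᵥ fun i => F (symmSingle s(i, i)) i := by
  induction z using Sym2.ind with | h i j => ?_
  obtain rfl | hij := eq_or_ne i j
  · rw [symmSingle_diag_mulVec]
    exact apply_symmSingle_diag_eq_single hrc i
  have h₁ := apply_symmSingle_diag_add_mul_eq hadd hsmul hrc hij one_ne_zero
  have h_c := apply_symmSingle_diag_add_mul_eq hadd hsmul hrc hij hc0
  have hi : F (symmSingle s(i, j)) i = F (symmSingle s(j, j)) j := by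
    have : (c - 1) * (F (symmSingle s(i, j)) i - F (symmSingle s(j, j)) j) = 0 := by
      linear_combination h_c - h₁
    simpa [sub_eq_zero, hc1] using this
  have hj : F (symmSingle s(i, j)) j = F (symmSingle s(i, i)) i := by
    linear_combination hi - h₁
  rw [symmSingle_mulVec_of_ne hij, apply_symmSingle_of_ne_eq_single_add_single hrc hij, hi, hj]

end

theorem stmt_12_general {K : Type*} [Field K] (hK : 2 < Cardinal.mk K) (n : ℕ)
    (F : Matrix (Fin n) (Fin n) K → (Fin n → K))
    (hadd : ∀ M N : Matrix (Fin n) (Fin n) K, M.IsSymm → N.IsSymm → F (M + N) = F M + F N)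
    (hsmul : ∀ (c : K) (M : Matrix (Fin n) (Fin n) K), M.IsSymm → F (c • M) = c • F M)
    (hrc : ∀ M : Matrix (Fin n) (Fin n) K, M.IsSymm → F M ∈ Set.range M.mulVec) :
    ∃ X : Fin n → K, ∀ M : Matrix (Fin n) (Fin n) K, M.IsSymm → F M = M.mulVec X := by
  obtain ⟨c, hc0, hc1⟩ := exists_ne_zero_ne_one_of_two_lt_mk hK
  exact ⟨_, fun M hM => apply_eq_mulVec_of_forall_symmSingle hadd hsmul
    (apply_symmSingle_eq_mulVec hadd hsmul hrc hc0 hc1) hM⟩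

theorem stmt_12 {K : Type*} [Field K] (hK : 2 < Cardinal.mk K) (n : ℕ) (hn : 2 ≤ n)
    (F : Matrix (Fin n) (Fin n) K → (Fin n → K))
    (hadd : ∀ M N : Matrix (Fin n) (Fin n) K, M.IsSymm → N.IsSymm → F (M + N) = F M + F N)
    (hsmul : ∀ (c : K) (M : Matrix (Fin n) (Fin n) K), M.IsSymm → F (c • M) = c • F M)
    (hrc : ∀ M : Matrix (Fin n) (Fin n) K, M.IsSymm → F M ∈ Set.range M.mulVec) :
    ∃ X : Fin n → K, ∀ M : Matrix (Fin n) (Fin n) K, M.IsSymm → F M = M.mulVec X :=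
  stmt_12_general hK n F hadd hsmul hrc
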